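/- Let u, v : ℝ × ℝ → ℝ be twice continuously differentiable functions of (x,t). Define the constant matrix E = [[0,1,0],[0,0,1],[1,0,0]], the matrix F(x,t) = [[0, 0, e^{2u}],[e^{−u−3v}, 0, 0],[0, e^{3v−u}, 0]], and the diagonal matrix D(x,t) = diag((u+v)_x+(u+v)_t, −2(v_x+v_t), (v−u)_x+(v−u)_t). For λ ∈ ℂ∖{0} set L̃(x,t,λ) = (λ/2)·E + (1/(2λ))·F + (1/2)·D and Ã(x,t,λ) = (λ/2)·E − (1/(2λ))·F + (1/2)·D. Then the zero-curvature equation ∂_t L̃ − ∂_x Ã + L̃·Ã − Ã·L̃ = 0 holds at every point of ℝ² for every λ ∈ ℂ∖{0} if and only if (u,v) satisfies the two-component nonlinear Klein–Gordon system u_tt − u_xx = −e^{2u} + e^{−u}·cosh(3v), v_tt − v_xx = −e^{−u}·sinh(3v) on ℝ². -/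

import Mathlib

open Matrix

/-- Partial derivative in the first variable (`x`) of a real-valued function. -/
noncomputable def pdx (f : ℝ × ℝ → ℝ) (p : ℝ × ℝ) : ℝ := fderiv ℝ f p (1, 0)

/-- Partial derivative in the second variable (`t`) of a real-valued function. -/
noncomputable def pdt (f : ℝ × ℝ → ℝ) (p : ℝ × ℝ) : ℝ := fderiv ℝ f p (0, 1)

/-- Entrywise partial derivative in `x` of a matrix-valued function. -/
noncomputable def pdxM (F : ℝ × ℝ → Matrix (Fin 3) (Fin 3) ℂ) (p : ℝ × ℝ) :
    Matrix (Fin 3) (Fin 3) ℂ :=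
  Matrix.of fun i j => fderiv ℝ (fun q => F q i j) p (1, 0)

/-- Entrywise partial derivative in `t` of a matrix-valued function. -/
noncomputable def pdtM (F : ℝ × ℝ → Matrix (Fin 3) (Fin 3) ℂ) (p : ℝ × ℝ) :
    Matrix (Fin 3) (Fin 3) ℂ :=
  Matrix.of fun i j => fderiv ℝ (fun q => F q i j) p (0, 1)

/-- The constant matrix `E`. -/
def Emat : Matrix (Fin 3) (Fin 3) ℂ := !![0, 1, 0; 0, 0, 1; 1, 0, 0]

/-- The matrix `F(x,t)`. -/
noncomputable def Fmat (u v : ℝ × ℝ → ℝ) (p : ℝ × ℝ) : Matrix (Fin 3) (Fin 3) ℂ :=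
  !![0, 0, ((Real.exp (2 * u p) : ℝ) : ℂ);
     ((Real.exp (-u p - 3 * v p) : ℝ) : ℂ), 0, 0;
     0, ((Real.exp (3 * v p - u p) : ℝ) : ℂ), 0]

/-- The diagonal matrix `D(x,t)`. -/
noncomputable def Dmat (u v : ℝ × ℝ → ℝ) (p : ℝ × ℝ) : Matrix (Fin 3) (Fin 3) ℂ :=
  Matrix.diagonal
    ![((pdx (fun q => u q + v q) p + pdt (fun q => u q + v q) p : ℝ) : ℂ),
      ((-2 * (pdx v p + pdt v p) : ℝ) : ℂ),
      ((pdx (fun q => v q - u q) p + pdt (fun q => v q - u q) p : ℝ) : ℂ)]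

/-- The matrix `L̃(x,t,λ)` of the laboratory-coordinate Lax pair. -/
noncomputable def Lmat (u v : ℝ × ℝ → ℝ) (lam : ℂ) (p : ℝ × ℝ) :
    Matrix (Fin 3) (Fin 3) ℂ :=
  (lam / 2) • Emat + (1 / (2 * lam)) • Fmat u v p + (1 / 2 : ℂ) • Dmat u v p

/-- The matrix `Ã(x,t,λ)` of the laboratory-coordinate Lax pair. -/
noncomputable def Amat (u v : ℝ × ℝ → ℝ) (lam : ℂ) (p : ℝ × ℝ) :
    Matrix (Fin 3) (Fin 3) ℂ :=
  (lam / 2) • Emat - (1 / (2 * lam)) • Fmat u v p + (1 / 2 : ℂ) • Dmat u v p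


namespace Scratch

noncomputable def S2 (f : ℝ × ℝ → ℝ) (p w : ℝ × ℝ) : ℝ :=
  fderiv ℝ (fderiv ℝ f) p w (1, 0) + fderiv ℝ (fderiv ℝ f) p w (0, 1)

lemma hasFDerivAt_pd (f : ℝ × ℝ → ℝ) (hf : ContDiff ℝ 2 f) (p w' : ℝ × ℝ) :
    HasFDerivAt (fun q => fderiv ℝ f q w')
      ((ContinuousLinearMap.apply ℝ ℝ w').comp (fderiv ℝ (fderiv ℝ f) p)) p := by
  have hd : DifferentiableAt ℝ (fderiv ℝ f) p :=
    ((hf.fderiv_right (m := 1) (by norm_num)).differentiable one_ne_zero) p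
  exact (ContinuousLinearMap.apply ℝ ℝ w').hasFDerivAt.comp p hd.hasFDerivAt

lemma hasFDerivAt_ofReal {g : ℝ × ℝ → ℝ} {g' : (ℝ × ℝ) →L[ℝ] ℝ} {p : ℝ × ℝ}
    (hg : HasFDerivAt g g' p) :
    HasFDerivAt (fun q => ((g q : ℝ) : ℂ)) (Complex.ofRealCLM.comp g') p :=
  Complex.ofRealCLM.hasFDerivAt.comp p hg

lemma keyF1 (u : ℝ × ℝ → ℝ) (hu : Differentiable ℝ u) (p w : ℝ × ℝ) :
    fderiv ℝ (fun q => ((Real.exp (2 * u q) : ℝ) : ℂ)) p w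
      = ((Real.exp (2 * u p) * (2 * fderiv ℝ u p w) : ℝ) : ℂ) := by
  have h1 : HasFDerivAt (fun q => 2 * u q) ((2 : ℝ) • fderiv ℝ u p) p :=
    (hu p).hasFDerivAt.const_mul 2
  have h2 := hasFDerivAt_ofReal h1.exp
  rw [h2.fderiv]; simp [mul_assoc]

lemma keyF2 (u v : ℝ × ℝ → ℝ) (hu : Differentiable ℝ u) (hv : Differentiable ℝ v) (p w : ℝ × ℝ) :
    fderiv ℝ (fun q => ((Real.exp (-u q - 3 * v q) : ℝ) : ℂ)) p w
      = ((Real.exp (-u p - 3 * v p) * (-fderiv ℝ u p w - 3 * fderiv ℝ v p w) : ℝ) : ℂ) := by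
  have h1 : HasFDerivAt (fun q => -u q - 3 * v q)
      (-fderiv ℝ u p - (3 : ℝ) • fderiv ℝ v p) p :=
    (hu p).hasFDerivAt.neg.sub ((hv p).hasFDerivAt.const_mul 3)
  have h2 := hasFDerivAt_ofReal h1.exp
  rw [h2.fderiv]; simp [mul_sub, mul_assoc]

lemma keyF3 (u v : ℝ × ℝ → ℝ) (hu : Differentiable ℝ u) (hv : Differentiable ℝ v) (p w : ℝ × ℝ) :
    fderiv ℝ (fun q => ((Real.exp (3 * v q - u q) : ℝ) : ℂ)) p w
      = ((Real.exp (3 * v p - u p) * (3 * fderiv ℝ v p w - fderiv ℝ u p w) : ℝ) : ℂ) := by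
  have h1 : HasFDerivAt (fun q => 3 * v q - u q)
      ((3 : ℝ) • fderiv ℝ v p - fderiv ℝ u p) p :=
    ((hv p).hasFDerivAt.const_mul 3).sub (hu p).hasFDerivAt
  have h2 := hasFDerivAt_ofReal h1.exp
  rw [h2.fderiv]; simp [mul_sub, mul_assoc]

lemma keyD0 (u v : ℝ × ℝ → ℝ) (hu : ContDiff ℝ 2 u) (hv : ContDiff ℝ 2 v) (p w : ℝ × ℝ) :
    fderiv ℝ (fun q =>
        ((pdx (fun q' => u q' + v q') q + pdt (fun q' => u q' + v q') q : ℝ) : ℂ)) p w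
      = ((S2 (fun q' => u q' + v q') p w : ℝ) : ℂ) := by
  have h1 := (hasFDerivAt_pd (fun q' => u q' + v q') (hu.add hv) p (1, 0)).add
    (hasFDerivAt_pd (fun q' => u q' + v q') (hu.add hv) p (0, 1))
  have h2 := hasFDerivAt_ofReal h1
  simp only [Pi.add_apply] at h2
  simp only [pdx, pdt]
  rw [h2.fderiv]; simp [S2]

lemma keyD1 (v : ℝ × ℝ → ℝ) (hv : ContDiff ℝ 2 v) (p w : ℝ × ℝ) :
    fderiv ℝ (fun q => ((-2 * (pdx v q + pdt v q) : ℝ) : ℂ)) p w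
      = ((-2 * S2 v p w : ℝ) : ℂ) := by
  have h1 := ((hasFDerivAt_pd v hv p (1, 0)).add (hasFDerivAt_pd v hv p (0, 1))).const_mul (-2 : ℝ)
  have h2 := hasFDerivAt_ofReal h1
  simp only [Pi.add_apply] at h2
  simp only [pdx, pdt]
  rw [h2.fderiv]; simp [S2]; ring

lemma keyD2 (u v : ℝ × ℝ → ℝ) (hu : ContDiff ℝ 2 u) (hv : ContDiff ℝ 2 v) (p w : ℝ × ℝ) :
    fderiv ℝ (fun q =>
        ((pdx (fun q' => v q' - u q') q + pdt (fun q' => v q' - u q') q : ℝ) : ℂ)) p w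
      = ((S2 (fun q' => v q' - u q') p w : ℝ) : ℂ) := by
  have h1 := (hasFDerivAt_pd (fun q' => v q' - u q') (hv.sub hu) p (1, 0)).add
    (hasFDerivAt_pd (fun q' => v q' - u q') (hv.sub hu) p (0, 1))
  have h2 := hasFDerivAt_ofReal h1
  simp only [Pi.add_apply] at h2
  simp only [pdx, pdt]
  rw [h2.fderiv]; simp [S2]

lemma diag3 (a b c : ℂ) : Matrix.diagonal ![a, b, c] = !![a, 0, 0; 0, b, 0; 0, 0, c] := by
  ext i j; fin_cases i <;> fin_cases j <;> rfl

/-- explicit derivative matrix of `Fmat` in direction `w` -/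
noncomputable def FtM (u v : ℝ × ℝ → ℝ) (p w : ℝ × ℝ) : Matrix (Fin 3) (Fin 3) ℂ :=
  !![0, 0, ((Real.exp (2 * u p) * (2 * fderiv ℝ u p w) : ℝ) : ℂ);
     ((Real.exp (-u p - 3 * v p) * (-fderiv ℝ u p w - 3 * fderiv ℝ v p w) : ℝ) : ℂ), 0, 0;
     0, ((Real.exp (3 * v p - u p) * (3 * fderiv ℝ v p w - fderiv ℝ u p w) : ℝ) : ℂ), 0]

/-- explicit derivative matrix of `Dmat` in direction `w` -/
noncomputable def DtM (u v : ℝ × ℝ → ℝ) (p w : ℝ × ℝ) : Matrix (Fin 3) (Fin 3) ℂ :=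
  !![((S2 (fun q => u q + v q) p w : ℝ) : ℂ), 0, 0;
     0, ((-2 * S2 v p w : ℝ) : ℂ), 0;
     0, 0, ((S2 (fun q => v q - u q) p w : ℝ) : ℂ)]

lemma fzero (p w : ℝ × ℝ) : fderiv ℝ (fun _ : ℝ × ℝ => (0 : ℂ)) p w = 0 := by simp

lemma pdM_F (u v : ℝ × ℝ → ℝ) (hu : ContDiff ℝ 2 u) (hv : ContDiff ℝ 2 v) (p w : ℝ × ℝ) :
    (Matrix.of fun i j => fderiv ℝ (fun q => Fmat u v q i j) p w) = FtM u v p w := by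
  have hud := hu.differentiable two_ne_zero
  have hvd := hv.differentiable two_ne_zero
  ext i j
  fin_cases i <;> fin_cases j
  · exact fzero p w
  · exact fzero p w
  · exact keyF1 u hud p w
  · exact keyF2 u v hud hvd p w
  · exact fzero p w
  · exact fzero p w
  · exact fzero p w
  · exact keyF3 u v hud hvd p w
  · exact fzero p w

lemma pdM_D (u v : ℝ × ℝ → ℝ) (hu : ContDiff ℝ 2 u) (hv : ContDiff ℝ 2 v) (p w : ℝ × ℝ) :
    (Matrix.of fun i j => fderiv ℝ (fun q => Dmat u v q i j) p w) = DtM u v p w := by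
  ext i j
  fin_cases i <;> fin_cases j
  · exact keyD0 u v hu hv p w
  · exact fzero p w
  · exact fzero p w
  · exact fzero p w
  · exact keyD1 v hv p w
  · exact fzero p w
  · exact fzero p w
  · exact fzero p w
  · exact keyD2 u v hu hv p w

lemma entry_diff_F (u v : ℝ × ℝ → ℝ) (hu : ContDiff ℝ 2 u) (hv : ContDiff ℝ 2 v) (p : ℝ × ℝ)
    (i j : Fin 3) : DifferentiableAt ℝ (fun q => Fmat u v q i j) p := by
  have hud := hu.differentiable two_ne_zero
  have hvd := hv.differentiable two_ne_zero
  have h1 : DifferentiableAt ℝ (fun q => ((Real.exp (2 * u q) : ℝ) : ℂ)) p :=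
    (hasFDerivAt_ofReal (((hud p).hasFDerivAt.const_mul 2).exp)).differentiableAt
  have h2 : DifferentiableAt ℝ (fun q => ((Real.exp (-u q - 3 * v q) : ℝ) : ℂ)) p :=
    (hasFDerivAt_ofReal (((hud p).hasFDerivAt.neg.sub
      ((hvd p).hasFDerivAt.const_mul 3)).exp)).differentiableAt
  have h3 : DifferentiableAt ℝ (fun q => ((Real.exp (3 * v q - u q) : ℝ) : ℂ)) p :=
    (hasFDerivAt_ofReal ((((hvd p).hasFDerivAt.const_mul 3).sub
      (hud p).hasFDerivAt).exp)).differentiableAt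
  fin_cases i <;> fin_cases j
  · exact differentiableAt_const _
  · exact differentiableAt_const _
  · exact h1
  · exact h2
  · exact differentiableAt_const _
  · exact differentiableAt_const _
  · exact differentiableAt_const _
  · exact h3
  · exact differentiableAt_const _

lemma entry_diff_D (u v : ℝ × ℝ → ℝ) (hu : ContDiff ℝ 2 u) (hv : ContDiff ℝ 2 v) (p : ℝ × ℝ)
    (i j : Fin 3) : DifferentiableAt ℝ (fun q => Dmat u v q i j) p := by
  have h1 : DifferentiableAt ℝ (fun q =>
      ((pdx (fun q' => u q' + v q') q + pdt (fun q' => u q' + v q') q : ℝ) : ℂ)) p := by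
    have := (hasFDerivAt_ofReal ((hasFDerivAt_pd (fun q' => u q' + v q') (hu.add hv) p (1, 0)).add
      (hasFDerivAt_pd (fun q' => u q' + v q') (hu.add hv) p (0, 1)))).differentiableAt
    exact this
  have h2 : DifferentiableAt ℝ (fun q => ((-2 * (pdx v q + pdt v q) : ℝ) : ℂ)) p := by
    have := (hasFDerivAt_ofReal (((hasFDerivAt_pd v hv p (1, 0)).add
      (hasFDerivAt_pd v hv p (0, 1))).const_mul (-2 : ℝ))).differentiableAt
    exact this
  have h3 : DifferentiableAt ℝ (fun q =>
      ((pdx (fun q' => v q' - u q') q + pdt (fun q' => v q' - u q') q : ℝ) : ℂ)) p := by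
    have := (hasFDerivAt_ofReal ((hasFDerivAt_pd (fun q' => v q' - u q') (hv.sub hu) p (1, 0)).add
      (hasFDerivAt_pd (fun q' => v q' - u q') (hv.sub hu) p (0, 1)))).differentiableAt
    exact this
  fin_cases i <;> fin_cases j
  · exact h1
  · exact differentiableAt_const _
  · exact differentiableAt_const _
  · exact differentiableAt_const _
  · exact h2
  · exact differentiableAt_const _
  · exact differentiableAt_const _
  · exact differentiableAt_const _
  · exact h3

lemma pdM_aux (u v : ℝ × ℝ → ℝ) (hu : ContDiff ℝ 2 u) (hv : ContDiff ℝ 2 v) (a b : ℂ)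
    (p w : ℝ × ℝ) :
    (Matrix.of fun i j => fderiv ℝ
        (fun q => (a • Emat + b • Fmat u v q + (1 / 2 : ℂ) • Dmat u v q) i j) p w)
      = b • FtM u v p w + (1 / 2 : ℂ) • DtM u v p w := by
  ext i j
  have hF := entry_diff_F u v hu hv p i j
  have hD := entry_diff_D u v hu hv p i j
  have e1 : (fun q => (a • Emat + b • Fmat u v q + (1 / 2 : ℂ) • Dmat u v q) i j)
      = fun q => (a * Emat i j + b * Fmat u v q i j) + (1 / 2 : ℂ) * Dmat u v q i j := by
    funext q; simp [Matrix.add_apply, Matrix.smul_apply]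
  simp only [Matrix.of_apply, e1]
  rw [fderiv_fun_add (f := fun q => a * Emat i j + b * Fmat u v q i j) ((differentiableAt_const _).add (hF.const_mul b)) (hD.const_mul (1 / 2 : ℂ))]
  rw [fderiv_fun_add (differentiableAt_const _) (hF.const_mul b)]
  rw [fderiv_const_mul hF b, fderiv_const_mul hD ((1 : ℂ) / 2)]
  simp [← pdM_F u v hu hv p w, ← pdM_D u v hu hv p w]


lemma symm2 (f : ℝ × ℝ → ℝ) (hf : ContDiff ℝ 2 f) (p v w : ℝ × ℝ) :
    fderiv ℝ (fderiv ℝ f) p v w = fderiv ℝ (fderiv ℝ f) p w v :=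
  (hf.contDiffAt.isSymmSndFDerivAt (by norm_num)) v w

noncomputable def BoxOp (f : ℝ × ℝ → ℝ) (p : ℝ × ℝ) : ℝ :=
  fderiv ℝ (fderiv ℝ f) p (0, 1) (0, 1) - fderiv ℝ (fderiv ℝ f) p (1, 0) (1, 0)

lemma pdt_pdt (f : ℝ × ℝ → ℝ) (hf : ContDiff ℝ 2 f) (p : ℝ × ℝ) :
    pdt (pdt f) p = fderiv ℝ (fderiv ℝ f) p (0, 1) (0, 1) := by
  have h := (hasFDerivAt_pd f hf p (0, 1)).fderiv
  show fderiv ℝ (fun q => fderiv ℝ f q (0, 1)) p (0, 1) = _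
  rw [h]; simp

lemma pdx_pdx (f : ℝ × ℝ → ℝ) (hf : ContDiff ℝ 2 f) (p : ℝ × ℝ) :
    pdx (pdx f) p = fderiv ℝ (fderiv ℝ f) p (1, 0) (1, 0) := by
  have h := (hasFDerivAt_pd f hf p (1, 0)).fderiv
  show fderiv ℝ (fun q => fderiv ℝ f q (1, 0)) p (1, 0) = _
  rw [h]; simp

lemma box_eq (f : ℝ × ℝ → ℝ) (hf : ContDiff ℝ 2 f) (p : ℝ × ℝ) :
    BoxOp f p = pdt (pdt f) p - pdx (pdx f) p := by
  rw [pdt_pdt f hf p, pdx_pdx f hf p]; rfl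

lemma fderiv2_add (u v : ℝ × ℝ → ℝ) (hu : ContDiff ℝ 2 u) (hv : ContDiff ℝ 2 v) (p : ℝ × ℝ) :
    fderiv ℝ (fderiv ℝ (fun q => u q + v q)) p
      = fderiv ℝ (fderiv ℝ u) p + fderiv ℝ (fderiv ℝ v) p := by
  have h1 : fderiv ℝ (fun q => u q + v q) = fun q => fderiv ℝ u q + fderiv ℝ v q :=
    funext fun q => fderiv_add (hu.differentiable two_ne_zero q) (hv.differentiable two_ne_zero q)
  rw [h1]
  exact fderiv_add ((hu.fderiv_right (m := 1) (by norm_num)).differentiable one_ne_zero p)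
    ((hv.fderiv_right (m := 1) (by norm_num)).differentiable one_ne_zero p)

lemma fderiv2_sub (u v : ℝ × ℝ → ℝ) (hu : ContDiff ℝ 2 u) (hv : ContDiff ℝ 2 v) (p : ℝ × ℝ) :
    fderiv ℝ (fderiv ℝ (fun q => u q - v q)) p
      = fderiv ℝ (fderiv ℝ u) p - fderiv ℝ (fderiv ℝ v) p := by
  have h1 : fderiv ℝ (fun q => u q - v q) = fun q => fderiv ℝ u q - fderiv ℝ v q :=
    funext fun q => fderiv_sub (hu.differentiable two_ne_zero q) (hv.differentiable two_ne_zero q)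
  rw [h1]
  exact fderiv_sub ((hu.fderiv_right (m := 1) (by norm_num)).differentiable one_ne_zero p)
    ((hv.fderiv_right (m := 1) (by norm_num)).differentiable one_ne_zero p)

lemma comm_aux (a b c : ℂ) (E F D : Matrix (Fin 3) (Fin 3) ℂ) :
    (a • E + b • F + c • D) * (a • E - b • F + c • D)
      - (a • E - b • F + c • D) * (a • E + b • F + c • D)
    = (-(2 * a * b)) • (E * F - F * E) + (2 * b * c) • (F * D - D * F) := by
  simp only [add_mul, mul_add, sub_mul, mul_sub, Matrix.smul_mul, Matrix.mul_smul, smul_smul,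
    smul_sub]
  module

lemma pd_add (u v : ℝ × ℝ → ℝ) (hu : Differentiable ℝ u) (hv : Differentiable ℝ v)
    (p w : ℝ × ℝ) :
    fderiv ℝ (fun q => u q + v q) p w = fderiv ℝ u p w + fderiv ℝ v p w := by
  rw [fderiv_fun_add (hu p) (hv p)]; simp

lemma pd_sub (u v : ℝ × ℝ → ℝ) (hu : Differentiable ℝ u) (hv : Differentiable ℝ v)
    (p w : ℝ × ℝ) :
    fderiv ℝ (fun q => u q - v q) p w = fderiv ℝ u p w - fderiv ℝ v p w := by
  rw [fderiv_fun_sub (hu p) (hv p)]; simp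

/-- The `1/(2λ)`-part of the zero-curvature equation vanishes identically. -/
lemma Z1_zero (u v : ℝ × ℝ → ℝ) (hu : ContDiff ℝ 2 u) (hv : ContDiff ℝ 2 v) (p : ℝ × ℝ) :
    FtM u v p (0, 1) + FtM u v p (1, 0)
      + (Fmat u v p * Dmat u v p - Dmat u v p * Fmat u v p) = 0 := by
  have hud := hu.differentiable two_ne_zero
  have hvd := hv.differentiable two_ne_zero
  ext i j
  fin_cases i <;> fin_cases j <;>
    simp [FtM, Fmat, Dmat, diag3, Matrix.mul_apply, Fin.sum_univ_three, pdx, pdt,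
      Matrix.vecHead, Matrix.vecTail,
      pd_add u v hud hvd p, pd_sub v u hvd hud p] <;>
    push_cast <;> ring

/-- The `λ⁰`-part of the zero-curvature equation as a diagonal matrix. -/
lemma Z0_diag (u v : ℝ × ℝ → ℝ) (hu : ContDiff ℝ 2 u) (hv : ContDiff ℝ 2 v) (p : ℝ × ℝ) :
    DtM u v p (0, 1) - DtM u v p (1, 0)
      - (Emat * Fmat u v p - Fmat u v p * Emat)
    = Matrix.diagonal
        ![((BoxOp u p + BoxOp v p
            - (Real.exp (-u p - 3 * v p) - Real.exp (2 * u p)) : ℝ) : ℂ),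
          ((-2 * BoxOp v p - (Real.exp (3 * v p - u p) - Real.exp (-u p - 3 * v p)) : ℝ) : ℂ),
          ((BoxOp v p - BoxOp u p - (Real.exp (2 * u p) - Real.exp (3 * v p - u p)) : ℝ) : ℂ)] := by
  ext i j
  fin_cases i <;> fin_cases j <;>
    simp [DtM, Emat, Fmat, diag3, Matrix.mul_apply, Fin.sum_univ_three, Matrix.diagonal_apply, S2, BoxOp,
      fderiv2_add u v hu hv p, fderiv2_sub v u hv hu p,
      symm2 u hu p (0, 1) (1, 0), symm2 v hv p (0, 1) (1, 0)] <;>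
    push_cast <;> ring

/-- The zero-curvature combination equals a `λ`-independent diagonal matrix. -/
lemma key (u v : ℝ × ℝ → ℝ) (hu : ContDiff ℝ 2 u) (hv : ContDiff ℝ 2 v) (p : ℝ × ℝ)
    (lam : ℂ) (hlam : lam ≠ 0) :
    pdtM (Lmat u v lam) p - pdxM (Amat u v lam) p
        + Lmat u v lam p * Amat u v lam p - Amat u v lam p * Lmat u v lam p
    = (1 / 2 : ℂ) • Matrix.diagonal
        ![((BoxOp u p + BoxOp v p
            - (Real.exp (-u p - 3 * v p) - Real.exp (2 * u p)) : ℝ) : ℂ),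
          ((-2 * BoxOp v p - (Real.exp (3 * v p - u p) - Real.exp (-u p - 3 * v p)) : ℝ) : ℂ),
          ((BoxOp v p - BoxOp u p - (Real.exp (2 * u p) - Real.exp (3 * v p - u p)) : ℝ) : ℂ)] := by
  have hL : pdtM (Lmat u v lam) p
      = (1 / (2 * lam)) • FtM u v p (0, 1) + (1 / 2 : ℂ) • DtM u v p (0, 1) :=
    pdM_aux u v hu hv (lam / 2) (1 / (2 * lam)) p (0, 1)
  have hAfun : ∀ q, Amat u v lam q
      = (lam / 2) • Emat + (-(1 / (2 * lam))) • Fmat u v q + (1 / 2 : ℂ) • Dmat u v q := by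
    intro q
    rw [Amat, sub_eq_add_neg, ← neg_smul]
  have hA : pdxM (Amat u v lam) p
      = (-(1 / (2 * lam))) • FtM u v p (1, 0) + (1 / 2 : ℂ) • DtM u v p (1, 0) := by
    simp only [pdxM, hAfun]
    exact pdM_aux u v hu hv (lam / 2) (-(1 / (2 * lam))) p (1, 0)
  have hC : Lmat u v lam p * Amat u v lam p - Amat u v lam p * Lmat u v lam p
      = (-(2 * (lam / 2) * (1 / (2 * lam)))) • (Emat * Fmat u v p - Fmat u v p * Emat)
        + (2 * (1 / (2 * lam)) * (1 / 2 : ℂ)) • (Fmat u v p * Dmat u v p - Dmat u v p * Fmat u v p) :=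
    comm_aux (lam / 2) (1 / (2 * lam)) (1 / 2 : ℂ) Emat (Fmat u v p) (Dmat u v p)
  have c1 : (-(2 * (lam / 2) * (1 / (2 * lam))) : ℂ) = -(1 / 2 : ℂ) := by
    field_simp
  have c2 : (2 * (1 / (2 * lam)) * (1 / 2 : ℂ)) = 1 / (2 * lam) := by
    field_simp
  rw [c1, c2] at hC
  have hZ : Fmat u v p * Dmat u v p - Dmat u v p * Fmat u v p
      = -(FtM u v p (0, 1) + FtM u v p (1, 0)) :=
    eq_neg_of_add_eq_zero_right (Z1_zero u v hu hv p)
  rw [hZ] at hC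
  rw [← Z0_diag u v hu hv p, hL, hA, add_sub_assoc, hC]
  module

end Scratch

/-- the zero-curvature equation `∂_t L̃ − ∂_x Ã + L̃·Ã − Ã·L̃ = 0` for all
`λ ≠ 0` is equivalent to the laboratory-coordinate two-component nonlinear
Klein–Gordon system. -/
theorem zero_curvature_iff_twoComponentKG
    (u v : ℝ × ℝ → ℝ) (hu : ContDiff ℝ 2 u) (hv : ContDiff ℝ 2 v) :
    (∀ p : ℝ × ℝ, ∀ lam : ℂ, lam ≠ 0 →
        pdtM (Lmat u v lam) p - pdxM (Amat u v lam) p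
          + Lmat u v lam p * Amat u v lam p - Amat u v lam p * Lmat u v lam p = 0) ↔
    (∀ p : ℝ × ℝ,
        pdt (pdt u) p - pdx (pdx u) p
          = -Real.exp (2 * u p) + Real.exp (-u p) * Real.cosh (3 * v p) ∧
        pdt (pdt v) p - pdx (pdx v) p = -(Real.exp (-u p) * Real.sinh (3 * v p))) := by
  have bu := Scratch.box_eq u hu
  have bv := Scratch.box_eq v hv
  constructor
  · intro h p
    have h1 := h p 1 one_ne_zero
    rw [Scratch.key u v hu hv p 1 one_ne_zero] at h1
    have e0 : Scratch.BoxOp u p + Scratch.BoxOp v p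
        - (Real.exp (-u p - 3 * v p) - Real.exp (2 * u p)) = 0 := by
      have h00 := congrFun (congrFun h1 0) 0
      simp only [Matrix.smul_apply, Matrix.diagonal_apply_eq, Matrix.cons_val_zero,
        smul_eq_mul, Matrix.zero_apply, mul_eq_zero] at h00
      exact_mod_cast h00.resolve_left (by norm_num)
    have e1 : -2 * Scratch.BoxOp v p
        - (Real.exp (3 * v p - u p) - Real.exp (-u p - 3 * v p)) = 0 := by
      have h11 := congrFun (congrFun h1 1) 1
      simp only [Matrix.smul_apply, Matrix.diagonal_apply_eq, Matrix.cons_val_one,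
        Matrix.head_cons, Matrix.cons_val_zero, smul_eq_mul, Matrix.zero_apply, mul_eq_zero] at h11
      exact_mod_cast h11.resolve_left (by norm_num)
    have ea : Real.exp (-u p) * Real.exp (3 * v p) = Real.exp (3 * v p - u p) := by
      rw [← Real.exp_add]; ring_nf
    have eb : Real.exp (-u p) * Real.exp (-(3 * v p)) = Real.exp (-u p - 3 * v p) := by
      rw [← Real.exp_add]; ring_nf
    rw [bu p, bv p] at e0
    rw [bv p] at e1
    constructor
    · rw [Real.cosh_eq]
      linarith [e0, e1, ea, eb]
    · rw [Real.sinh_eq]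
      linarith [e1, ea, eb]
  · intro h p lam hlam
    rw [Scratch.key u v hu hv p lam hlam]
    obtain ⟨h1, h2⟩ := h p
    have ea : Real.exp (-u p) * Real.exp (3 * v p) = Real.exp (3 * v p - u p) := by
      rw [← Real.exp_add]; ring_nf
    have eb : Real.exp (-u p) * Real.exp (-(3 * v p)) = Real.exp (-u p - 3 * v p) := by
      rw [← Real.exp_add]; ring_nf
    rw [Real.cosh_eq] at h1
    rw [Real.sinh_eq] at h2
    have e0 : Scratch.BoxOp u p + Scratch.BoxOp v p
        - (Real.exp (-u p - 3 * v p) - Real.exp (2 * u p)) = 0 := by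
      rw [bu p, bv p]; linarith [h1, h2, ea, eb]
    have e1 : -2 * Scratch.BoxOp v p
        - (Real.exp (3 * v p - u p) - Real.exp (-u p - 3 * v p)) = 0 := by
      rw [bv p]; linarith [h2, ea, eb]
    have e2 : Scratch.BoxOp v p - Scratch.BoxOp u p
        - (Real.exp (2 * u p) - Real.exp (3 * v p - u p)) = 0 := by
      rw [bu p, bv p]; linarith [h1, h2, ea, eb]
    rw [e0, e1, e2]
    ext i j
    fin_cases i <;> fin_cases j <;> simp [Matrix.diagonal_apply]
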